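/- arXiv:1608.06095 — 5 statements merged into one kernel-verified Lean document; each statement's English description precedes it below -/
import Mathlib

section
/- Let G and H be topological groups, U ⊆ G and V ⊆ H open subsets, and E a locally convex space. If f : U × V → E is a C^{1,1}-map, then for all (x,y) ∈ U × V, γ ∈ 𝔏(G) and η ∈ 𝔏(H), the iterated derivative (D_{(0,η)}D_{(γ,0)}f)(x,y) exists and equals (D_{(γ,0)}D_{(0,η)}f)(x,y). -/
/-!
Pulling `f` back along `(s, t) ↦ (x γ(s), y η(t))` reduces the claim to Schwarz's theorem for a
function `g` of two real variables with values in a locally convex space. Fix a continuous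
seminorm `p` and let `w = ∂ₛ∂ₜg(0, 0)`. Applying the mean value inequality for `p` first in `s`
(to `∂ₜg`) and then in `t` (to `g(s, ·) - g(0, ·)`) gives
`p (g(s,t) - g(0,t) - g(s,0) + g(0,0) - s t w) ≤ ε |s| |t|` near `(0, 0)`, by continuity of
`∂ₛ∂ₜg` at `(0, 0)`. Dividing by `s t` and letting `s → 0` yields
`p (t⁻¹ (∂ₛg(0,t) - ∂ₛg(0,0)) - w) ≤ ε` for small `t ≠ 0`.
-/

open Filter Topology Set

/-- The set of continuous one-parameter subgroups `γ : (ℝ,+) → G`, as a subtype of `C(ℝ, G)`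
(hence endowed with the compact-open topology). -/
abbrev OneParam (G : Type*) [TopologicalSpace G] [Group G] : Type _ :=
  {γ : C(ℝ, G) // ∀ s t : ℝ, γ (s + t) = γ s * γ t}

/-- `D_γ f(x) = v`, i.e. `(1/t)(f(x·γ(t)) − f(x)) → v` as `t → 0`. -/
def HasDirDeriv {G E : Type*} [TopologicalSpace G] [Group G]
    [AddCommGroup E] [Module ℝ E] [TopologicalSpace E]
    (f : G → E) (x : G) (γ : OneParam G) (v : E) : Prop :=
  Tendsto (fun t : ℝ => t⁻¹ • (f (x * γ.1 t) - f x)) (𝓝[≠] (0 : ℝ)) (𝓝 v)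

section Slope

variable {E : Type*} [AddCommGroup E] [Module ℝ E]

theorem slope_fun_sub (f g : ℝ → E) (a b : ℝ) :
    slope (fun x => f x - g x) a b = slope f a b - slope g a b := by
  simp only [slope_def_module, smul_sub]
  abel

theorem slope_smul_const (w : E) {a b : ℝ} (h : a ≠ b) : slope (fun x : ℝ => x • w) a b = w := by
  rw [slope_def_module, ← sub_smul, smul_smul, inv_mul_cancel₀ (sub_ne_zero.2 h.symm), one_smul]

variable [TopologicalSpace E]

theorem tendsto_slope_iff_tendsto_smul_sub {k : ℝ → E} {σ : ℝ} {v : E} :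
    Tendsto (slope k σ) (𝓝[≠] σ) (𝓝 v) ↔
      Tendsto (fun τ : ℝ => τ⁻¹ • (k (σ + τ) - k σ)) (𝓝[≠] 0) (𝓝 v) := by
  have : 𝓝[≠] σ = map (σ + ·) (𝓝[≠] 0) := by simp
  simp [this, -map_add_left_nhdsNE, slope_def_module, Function.comp_def]

variable [IsTopologicalAddGroup E] [ContinuousSMul ℝ E]

theorem continuousAt_of_tendsto_slope {k : ℝ → E} {σ : ℝ} {v : E}
    (h : Tendsto (slope k σ) (𝓝[≠] σ) (𝓝 v)) : ContinuousAt k σ := by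
  rw [← continuousWithinAt_compl_self, ContinuousWithinAt, ← tendsto_sub_nhds_zero_iff]
  have hsub : Tendsto (fun z => z - σ) (𝓝[≠] σ) (𝓝 0) :=
    tendsto_sub_nhds_zero_iff.2 nhdsWithin_le_nhds
  refine (zero_smul ℝ v ▸ hsub.smul h).congr' ?_
  filter_upwards [self_mem_nhdsWithin] with z _
  exact sub_smul_slope k σ z

end Slope

namespace Seminorm

variable {E : Type*} [AddCommGroup E] [Module ℝ E] [TopologicalSpace E]
  [IsTopologicalAddGroup E] [ContinuousSMul ℝ E]
  (p : Seminorm ℝ E) (hp : Continuous p) {k k' : ℝ → E} {a b M : ℝ}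
include hp

theorem image_sub_le_of_slope_le_segment (hab : a ≤ b)
    (hk : ∀ σ ∈ Icc a b, Tendsto (slope k σ) (𝓝[≠] σ) (𝓝 (k' σ)))
    (hM : ∀ σ ∈ Icc a b, p (k' σ) ≤ M) :
    p (k b - k a) ≤ M * (b - a) := by
  set φ : ℝ → ℝ := fun σ => p (k σ - k a)
  have hφ : ContinuousOn φ (Icc a b) := fun σ hσ =>
    (hp.continuousAt.comp ((continuousAt_of_tendsto_slope (hk σ hσ)).sub
      continuousAt_const)).continuousWithinAt
  have hslope : ∀ σ z, σ < z → slope φ σ z ≤ p (slope k σ z) := by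
    intro σ z hσz
    have hφ_sub : φ z - φ σ ≤ p (k z - k σ) := by
      simpa only [sub_sub_sub_cancel_right] using
        (le_abs_self _).trans (abs_sub_map_le_sub p (k z - k a) (k σ - k a))
    rw [slope_def_field, slope_def_module, map_smul_eq_mul, Real.norm_eq_abs,
      abs_of_pos (inv_pos.2 (sub_pos.2 hσz)), inv_mul_eq_div]
    gcongr
  have hbound : ∀ σ ∈ Ico a b, ∀ r, M < r → ∃ᶠ z in 𝓝[>] σ, slope φ σ z < r := by
    intro σ hσ r hr
    have hlim : Tendsto (fun z => p (slope k σ z)) (𝓝[>] σ) (𝓝 (p (k' σ))) :=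
      (hp.tendsto _).comp ((hk σ (Ico_subset_Icc_self hσ)).mono_left (nhdsGT_le_nhdsNE σ))
    have hlt := hlim.eventually_lt_const ((hM σ (Ico_subset_Icc_self hσ)).trans_lt hr)
    refine (hlt.and self_mem_nhdsWithin).mono (fun z hz => ?_) |>.frequently
    exact (hslope σ z hz.2).trans_lt hz.1
  refine image_le_of_liminf_slope_right_le_deriv_boundary (B := fun σ => M * (σ - a))
    (B' := fun _ => M) hφ (by simp [φ]) (by fun_prop) (fun σ _ => ?_) hbound
    (right_mem_Icc.2 hab)
  simpa using ((hasDerivWithinAt_id σ (Ici σ)).sub_const a).const_mul M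

theorem image_sub_le_of_slope_le_uIcc
    (hk : ∀ σ ∈ uIcc a b, Tendsto (slope k σ) (𝓝[≠] σ) (𝓝 (k' σ)))
    (hM : ∀ σ ∈ uIcc a b, p (k' σ) ≤ M) :
    p (k b - k a) ≤ M * |b - a| := by
  rcases le_total a b with hab | hba
  · rw [abs_of_nonneg (sub_nonneg.2 hab)]
    exact p.image_sub_le_of_slope_le_segment hp hab (fun σ hσ => hk σ (Icc_subset_uIcc hσ))
      (fun σ hσ => hM σ (Icc_subset_uIcc hσ))
  · rw [map_sub_rev, abs_sub_comm, abs_of_nonneg (sub_nonneg.2 hba)]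
    exact p.image_sub_le_of_slope_le_segment hp hba (fun σ hσ => hk σ (Icc_subset_uIcc' hσ))
      (fun σ hσ => hM σ (Icc_subset_uIcc' hσ))

theorem image_sub_sub_smul_le {w : E}
    (hk : ∀ σ ∈ uIcc a b, Tendsto (slope k σ) (𝓝[≠] σ) (𝓝 (k' σ)))
    (hM : ∀ σ ∈ uIcc a b, p (k' σ - w) ≤ M) :
    p (k b - k a - (b - a) • w) ≤ M * |b - a| := by
  have h := p.image_sub_le_of_slope_le_uIcc hp (k := fun σ => k σ - σ • w)
    (fun σ hσ => ?_) hM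
  · convert h using 2
    simp only [sub_smul]
    abel
  · refine ((hk σ hσ).sub_const w).congr' ?_
    filter_upwards [self_mem_nhdsWithin] with z hz
    rw [slope_fun_sub, slope_smul_const w (Ne.symm hz)]

theorem second_difference_le {g gt gts : ℝ → ℝ → E} {s t : ℝ} {w : E}
    (hgt : ∀ σ ∈ uIcc a s, ∀ τ ∈ uIcc b t, Tendsto (slope (g σ) τ) (𝓝[≠] τ) (𝓝 (gt σ τ)))
    (hgts : ∀ σ ∈ uIcc a s, ∀ τ ∈ uIcc b t,
      Tendsto (slope (gt · τ) σ) (𝓝[≠] σ) (𝓝 (gts σ τ)))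
    (hM : ∀ σ ∈ uIcc a s, ∀ τ ∈ uIcc b t, p (gts σ τ - w) ≤ M) :
    p (g s t - g a t - (g s b - g a b) - ((s - a) * (t - b)) • w) ≤ M * |s - a| * |t - b| := by
  have hinner : ∀ τ ∈ uIcc b t, p (gt s τ - gt a τ - (s - a) • w) ≤ M * |s - a| :=
    fun τ hτ => p.image_sub_sub_smul_le hp (fun σ hσ => hgts σ hσ τ hτ) (fun σ hσ => hM σ hσ τ hτ)
  have houter := p.image_sub_sub_smul_le hp (k := fun τ => g s τ - g a τ) (fun τ hτ => ?_) hinner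
  · rwa [mul_comm (s - a), mul_smul]
  · refine ((hgt s right_mem_uIcc τ hτ).sub (hgt a left_mem_uIcc τ hτ)).congr fun z => ?_
    rw [slope_fun_sub]

theorem slope_sub_le_of_second_difference_le {g : ℝ → ℝ → E} {gs : ℝ → E} {t : ℝ} {w : E}
    (ht : t ≠ b)
    (hgs_b : Tendsto (slope (g · b) a) (𝓝[≠] a) (𝓝 (gs b)))
    (hgs_t : Tendsto (slope (g · t) a) (𝓝[≠] a) (𝓝 (gs t)))
    (hM : ∀ᶠ s in 𝓝 a, p (g s t - g a t - (g s b - g a b) - ((s - a) * (t - b)) • w) ≤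
      M * |s - a| * |t - b|) :
    p (slope gs b t - w) ≤ M := by
  have hlim : Tendsto (fun s => (t - b)⁻¹ • (slope (g · t) a s - slope (g · b) a s)) (𝓝[≠] a)
      (𝓝 (slope gs b t)) := by
    rw [slope_def_module]
    exact (hgs_t.sub hgs_b).const_smul _
  have hpw : Continuous fun v => p (v - w) := hp.comp (continuous_id.sub continuous_const)
  refine le_of_tendsto ((hpw.tendsto _).comp hlim) ?_
  filter_upwards [self_mem_nhdsWithin, nhdsWithin_le_nhds hM] with s (hs : s ≠ a) hsM
  have hst : (s - a) * (t - b) ≠ 0 := mul_ne_zero (sub_ne_zero.2 hs) (sub_ne_zero.2 ht)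
  have heq : (t - b)⁻¹ • (slope (g · t) a s - slope (g · b) a s) - w =
      ((s - a) * (t - b))⁻¹ • (g s t - g a t - (g s b - g a b) - ((s - a) * (t - b)) • w) := by
    rw [smul_sub _ _ (((s - a) * (t - b)) • w), inv_smul_smul₀ hst, slope_def_module,
      slope_def_module, ← smul_sub, smul_smul, mul_inv_rev]
  rw [Function.comp_apply, heq, map_smul_eq_mul, Real.norm_eq_abs, abs_inv, abs_mul]
  calc (|s - a| * |t - b|)⁻¹ * p (g s t - g a t - (g s b - g a b) - ((s - a) * (t - b)) • w)
      ≤ (|s - a| * |t - b|)⁻¹ * (M * |s - a| * |t - b|) := by gcongr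
    _ = M := by
        field_simp [abs_ne_zero.2 (sub_ne_zero.2 hs), abs_ne_zero.2 (sub_ne_zero.2 ht)]

end Seminorm

theorem tendsto_slope_of_mixed_partial {E : Type*} [AddCommGroup E] [Module ℝ E]
    [TopologicalSpace E] [IsTopologicalAddGroup E] [ContinuousSMul ℝ E] [LocallyConvexSpace ℝ E]
    {g gt gts : ℝ → ℝ → E} {gs : ℝ → E} {a b : ℝ}
    (hgs : ∀ᶠ t in 𝓝 b, Tendsto (slope (g · t) a) (𝓝[≠] a) (𝓝 (gs t)))
    (hgt : ∀ᶠ q in 𝓝 (a, b), Tendsto (slope (g q.1) q.2) (𝓝[≠] q.2) (𝓝 (gt q.1 q.2)))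
    (hgts : ∀ᶠ q in 𝓝 (a, b), Tendsto (slope (gt · q.2) q.1) (𝓝[≠] q.1) (𝓝 (gts q.1 q.2)))
    (hcont : ContinuousAt (fun q : ℝ × ℝ => gts q.1 q.2) (a, b)) :
    Tendsto (slope gs b) (𝓝[≠] b) (𝓝 (gts a b)) := by
  have hE := with_gaugeSeminormFamily (𝕜 := ℝ) (E := E)
  rw [hE.tendsto_nhds]
  intro i ε hε
  set p := gaugeSeminormFamily ℝ E i
  have hp : Continuous p := hE.continuous_seminorm i
  set w := gts a b
  have hclose : ∀ᶠ q : ℝ × ℝ in 𝓝 (a, b), p (gts q.1 q.2 - w) < ε / 2 := by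
    have : Tendsto (fun q : ℝ × ℝ => p (gts q.1 q.2 - w)) (𝓝 (a, b)) (𝓝 (p (w - w))) :=
      (hp.tendsto _).comp (hcont.sub_const w)
    rw [sub_self, map_zero] at this
    exact this.eventually_lt_const (half_pos hε)
  obtain ⟨δ, hδ, hball⟩ := Metric.eventually_nhds_iff.1 (hgt.and (hgts.and hclose))
  have hrect : ∀ s t, |s - a| < δ → |t - b| < δ → ∀ σ ∈ uIcc a s, ∀ τ ∈ uIcc b t,
      dist (σ, τ) (a, b) < δ := fun s t hs ht σ hσ τ hτ =>
    max_lt ((abs_sub_left_of_mem_uIcc hσ).trans_lt hs) ((abs_sub_left_of_mem_uIcc hτ).trans_lt ht)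
  have hsecond : ∀ s t, |s - a| < δ → |t - b| < δ →
      p (g s t - g a t - (g s b - g a b) - ((s - a) * (t - b)) • w) ≤
        ε / 2 * |s - a| * |t - b| := fun s t hs ht =>
    p.second_difference_le hp
      (fun σ hσ τ hτ => (hball (hrect s t hs ht σ hσ τ hτ)).1)
      (fun σ hσ τ hτ => (hball (hrect s t hs ht σ hσ τ hτ)).2.1)
      (fun σ hσ τ hτ => (hball (hrect s t hs ht σ hσ τ hτ)).2.2.le)
  filter_upwards [self_mem_nhdsWithin,
    nhdsWithin_le_nhds (hgs.and (Metric.ball_mem_nhds b hδ))] with t (ht : t ≠ b) ⟨hgs_t, htδ⟩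
  refine lt_of_le_of_lt (p.slope_sub_le_of_second_difference_le hp ht hgs.self_of_nhds hgs_t
    (Metric.eventually_nhds_iff.2 ⟨δ, hδ, fun s hs => hsecond s t hs htδ⟩)) (half_lt_self hε)

namespace OneParam

variable {G : Type*} [TopologicalSpace G] [Group G]

theorem map_zero (γ : OneParam G) : γ.1 0 = 1 :=
  mul_left_cancel (a := γ.1 0) (by rw [← γ.2, add_zero, mul_one])

theorem eventually_mul_mem [ContinuousMul G] (γ : OneParam G) {U : Set G} (hU : IsOpen U)
    {x : G} (hx : x ∈ U) : ∀ᶠ s in 𝓝 (0 : ℝ), x * γ.1 s ∈ U :=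
  (continuous_const.mul γ.1.continuous).continuousAt.preimage_mem_nhds
    (by simpa [map_zero] using hU.mem_nhds hx)

end OneParam

theorem HasDirDeriv.tendsto_slope {G E : Type*} [TopologicalSpace G] [Group G]
    [AddCommGroup E] [Module ℝ E] [TopologicalSpace E] {f : G → E} {x : G} {γ : OneParam G}
    {s : ℝ} {v : E} (h : HasDirDeriv f (x * γ.1 s) γ v) :
    Tendsto (slope (fun s => f (x * γ.1 s)) s) (𝓝[≠] s) (𝓝 v) := by
  rw [tendsto_slope_iff_tendsto_smul_sub]
  refine h.congr fun τ => ?_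
  rw [γ.2, mul_assoc]

theorem schwarz_C11_general
    {G H E : Type*} [Group G] [TopologicalSpace G] [IsTopologicalGroup G]
    [Group H] [TopologicalSpace H] [IsTopologicalGroup H]
    [AddCommGroup E] [Module ℝ E] [TopologicalSpace E] [IsTopologicalAddGroup E]
    [ContinuousSMul ℝ E] [LocallyConvexSpace ℝ E]
    (U : Set G) (V : Set H) (hU : IsOpen U) (hV : IsOpen V)
    (f : G → H → E)
    (d10 : G → H → OneParam G → E) (d01 : G → H → OneParam H → E)
    (d11 : G → H → OneParam G → OneParam H → E)
    -- `f` is `C^{1,0}` with partial derivative `d10`: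
    (hd10 : ∀ x ∈ U, ∀ y ∈ V, ∀ γ : OneParam G,
      HasDirDeriv (fun x' => f x' y) x γ (d10 x y γ))
    -- `f` is `C^{0,1}` with partial derivative `d01`:
    (hd01 : ∀ x ∈ U, ∀ y ∈ V, ∀ η : OneParam H,
      HasDirDeriv (f x) y η (d01 x y η))
    -- `(D_{(γ,0)}D_{(0,η)}f)(x,y)` exists and equals `d11 x y γ η`, continuously:
    (hd11 : ∀ x ∈ U, ∀ y ∈ V, ∀ (γ : OneParam G) (η : OneParam H),
      HasDirDeriv (fun x' => d01 x' y η) x γ (d11 x y γ η))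
    (hd11c : ContinuousOn
      (fun p : G × H × OneParam G × OneParam H => d11 p.1 p.2.1 p.2.2.1 p.2.2.2)
      (U ×ˢ V ×ˢ (univ : Set (OneParam G × OneParam H)))) :
    ∀ x ∈ U, ∀ y ∈ V, ∀ (γ : OneParam G) (η : OneParam H),
      HasDirDeriv (fun y' => d10 x y' γ) y η (d11 x y γ η) := by
  intro x hx y hy γ η
  have hU' := OneParam.eventually_mul_mem γ hU hx
  have hV' := OneParam.eventually_mul_mem η hV hy
  have hUV := hU'.prodMk_nhds hV'
  have hψ : Continuous fun q : ℝ × ℝ => (x * γ.1 q.1, y * η.1 q.2, γ, η) := by fun_prop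
  have hd11_at : ContinuousAt
      (fun q : ℝ × ℝ => d11 (x * γ.1 q.1) (y * η.1 q.2) γ η) (0, 0) :=
    (hd11c.continuousAt ((hU.prod (hV.prod isOpen_univ)).mem_nhds
      (by simp [OneParam.map_zero, hx, hy]))).comp (x := (0, 0)) hψ.continuousAt
  have key := tendsto_slope_of_mixed_partial
    (g := fun s t => f (x * γ.1 s) (y * η.1 t))
    (gs := fun t => d10 (x * γ.1 0) (y * η.1 t) γ)
    (gt := fun s t => d01 (x * γ.1 s) (y * η.1 t) η)
    (gts := fun s t => d11 (x * γ.1 s) (y * η.1 t) γ η)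
    (hV'.mono fun t ht => (hd10 _ hU'.self_of_nhds _ ht γ).tendsto_slope)
    (hUV.mono fun q hq => (hd01 _ hq.1 _ hq.2 η).tendsto_slope)
    (hUV.mono fun q hq => (hd11 _ hq.1 _ hq.2 γ η).tendsto_slope)
    hd11_at
  simpa only [HasDirDeriv, OneParam.map_zero, mul_one, zero_add] using
    tendsto_slope_iff_tendsto_smul_sub.1 key

/-- If `f : U × V → E` is `C^{1,1}` (with partial derivative maps `d10 = d^{(1,0)}f`,
`d01 = d^{(0,1)}f` and `d11 = d^{(1,1)}f`), then for all `(x,y) ∈ U × V`, `γ ∈ 𝔏(G)`, `η ∈ 𝔏(H)`,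
the iterated derivative `(D_{(0,η)}D_{(γ,0)}f)(x,y)` exists and equals
`(D_{(γ,0)}D_{(0,η)}f)(x,y) = d11 x y γ η`. -/
theorem schwarz_C11
    {G H E : Type*} [Group G] [TopologicalSpace G] [IsTopologicalGroup G]
    [Group H] [TopologicalSpace H] [IsTopologicalGroup H]
    [AddCommGroup E] [Module ℝ E] [TopologicalSpace E] [IsTopologicalAddGroup E]
    [ContinuousSMul ℝ E] [LocallyConvexSpace ℝ E] [T2Space E]
    (U : Set G) (V : Set H) (hU : IsOpen U) (hV : IsOpen V)
    (f : G → H → E)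
    (d10 : G → H → OneParam G → E) (d01 : G → H → OneParam H → E)
    (d11 : G → H → OneParam G → OneParam H → E)
    -- `f` is continuous on `U × V`:
    (hf : ContinuousOn (fun p : G × H => f p.1 p.2) (U ×ˢ V))
    -- `f` is `C^{1,0}` with partial derivative `d10`:
    (hd10 : ∀ x ∈ U, ∀ y ∈ V, ∀ γ : OneParam G,
      HasDirDeriv (fun x' => f x' y) x γ (d10 x y γ))
    (hd10c : ContinuousOn (fun p : G × H × OneParam G => d10 p.1 p.2.1 p.2.2)
      (U ×ˢ V ×ˢ (univ : Set (OneParam G))))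
    -- `f` is `C^{0,1}` with partial derivative `d01`:
    (hd01 : ∀ x ∈ U, ∀ y ∈ V, ∀ η : OneParam H,
      HasDirDeriv (f x) y η (d01 x y η))
    (hd01c : ContinuousOn (fun p : G × H × OneParam H => d01 p.1 p.2.1 p.2.2)
      (U ×ˢ V ×ˢ (univ : Set (OneParam H))))
    -- `(D_{(γ,0)}D_{(0,η)}f)(x,y)` exists and equals `d11 x y γ η`, continuously:
    (hd11 : ∀ x ∈ U, ∀ y ∈ V, ∀ (γ : OneParam G) (η : OneParam H),
      HasDirDeriv (fun x' => d01 x' y η) x γ (d11 x y γ η))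
    (hd11c : ContinuousOn
      (fun p : G × H × OneParam G × OneParam H => d11 p.1 p.2.1 p.2.2.1 p.2.2.2)
      (U ×ˢ V ×ˢ (univ : Set (OneParam G × OneParam H)))) :
    ∀ x ∈ U, ∀ y ∈ V, ∀ (γ : OneParam G) (η : OneParam H),
      HasDirDeriv (fun y' => d10 x y' γ) y η (d11 x y γ η) :=
  schwarz_C11_general U V hU hV f d10 d01 d11 hd10 hd01 hd11 hd11c
end

section
/- Let G be a topological group, U ⊆ G open, V a Hausdorff topological space, and E a locally convex space. If f : U × V → E is a C^{1,0}-map, then the map f^∨ : U → C(V,E), x ↦ f(x,·), into the space C(V,E) of continuous maps with the compact-open topology (a Hausdorff topological vector space), is C¹, and d(f^∨)(x,γ) = (d^{(1,0)}f)(x,·,γ) ∈ C(V,E) for all x ∈ U and γ ∈ 𝔏(G), i.e. D_γ(f^∨)(x)(y) = D_{(γ,0)}f(x,y) for all y ∈ V. -/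
open Filter Topology Set

/-!
Continuity of `f^∨` and of `d(f^∨)` is the exponential law: a map into `C(V,E)` is continuous
as soon as its uncurried form is. For the derivative, compact-open convergence means uniform
convergence on compact `K ⊆ V`, tested on closed convex neighbourhoods `W` of `0`. By the mean
value theorem (via Hahn–Banach) the difference quotient
`t⁻¹ (f(xγ(t),y) - f(x,y)) - d^{(1,0)}f(x,y,γ)` lies in the closed convex hull of the values
`d^{(1,0)}f(xγ(s),y,γ) - d^{(1,0)}f(x,y,γ)`, `s` between `0` and `t`, and by compactness of `K`
these lie in `W` for all `y ∈ K` once `t` is small.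
-/

namespace OneParam

variable {G : Type*} [TopologicalSpace G] [Group G]

theorem tendsto_mul_nhds_zero [ContinuousMul G] (x : G) (γ : OneParam G) :
    Tendsto (fun s : ℝ => x * γ.1 s) (𝓝 0) (𝓝 x) := by
  have h : Continuous fun s : ℝ => x * γ.1 s := by fun_prop
  simpa only [map_zero, mul_one] using h.tendsto 0

end OneParam

theorem HasDirDeriv.tendsto_along {G E : Type*} [TopologicalSpace G] [Group G]
    [AddCommGroup E] [Module ℝ E] [TopologicalSpace E]
    {g : G → E} {x : G} {γ : OneParam G} {s : ℝ} {v : E} (h : HasDirDeriv g (x * γ.1 s) γ v) :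
    Tendsto (fun t : ℝ => t⁻¹ • (g (x * γ.1 (s + t)) - g (x * γ.1 s))) (𝓝[≠] 0) (𝓝 v) :=
  h.congr fun t => by rw [γ.2 s t, mul_assoc]

theorem Filter.Eventually.forall_uIcc {P : ℝ → Prop} {a : ℝ} (h : ∀ᶠ s in 𝓝 a, P s) :
    ∀ᶠ t in 𝓝 a, ∀ s ∈ uIcc a t, P s := by
  obtain ⟨l, u, hau, hsub⟩ := mem_nhds_iff_exists_Ioo_subset.mp h
  filter_upwards [Ioo_mem_nhds hau.1 hau.2] with t ht s hs
  exact hsub (ordConnected_Ioo.uIcc_subset hau ht hs)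

section LocallyConvex

variable {E : Type*} [AddCommGroup E] [Module ℝ E] [TopologicalSpace E]
  [IsTopologicalAddGroup E] [ContinuousSMul ℝ E] [LocallyConvexSpace ℝ E]

/-- Hahn–Banach separation from `W` reduces this to the real mean value theorem. -/
theorem slope_mem_of_forall_deriv_mem {c c' : ℝ → E} {a b : ℝ} {W : Set E}
    (hWconv : Convex ℝ W) (hWclosed : IsClosed W) (hab : a ≠ b) (hc : ContinuousOn c (uIcc a b))
    (hderiv : ∀ s ∈ uIoo a b,
      Tendsto (fun h : ℝ => h⁻¹ • (c (s + h) - c s)) (𝓝[≠] 0) (𝓝 (c' s)))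
    (hmem : ∀ s ∈ uIoo a b, c' s ∈ W) : slope c a b ∈ W := by
  wlog hlt : a < b generalizing a b
  · rw [slope_comm]
    rw [uIcc_comm] at hc
    rw [uIoo_comm] at hderiv hmem
    exact this hab.symm hc hderiv hmem (lt_of_le_of_ne (not_lt.mp hlt) hab.symm)
  rw [uIcc_of_lt hlt] at hc
  rw [uIoo_of_lt hlt] at hderiv hmem
  by_contra hout
  obtain ⟨φ, u, hφW, hφslope⟩ := geometric_hahn_banach_closed_point hWconv hWclosed hout
  have hφderiv : ∀ s ∈ Ioo a b, HasDerivAt (φ ∘ c) (φ (c' s)) s := fun s hs =>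
    hasDerivAt_iff_tendsto_slope_zero.mpr <|
      ((φ.continuous.tendsto _).comp (hderiv s hs)).congr fun h => by simp
  obtain ⟨s, hs, hφs⟩ := exists_hasDerivAt_eq_slope (φ ∘ c) (fun s => φ (c' s)) hlt
    (φ.continuous.comp_continuousOn hc) hφderiv
  have hφslope' : φ (slope c a b) = (φ (c b) - φ (c a)) / (b - a) := by
    simp [slope_def_module, div_eq_inv_mul]
  rw [Function.comp_apply, Function.comp_apply] at hφs
  linarith [hφW _ (hmem s hs)]

end LocallyConvex

theorem IsCompact.eventually_forall_sub_mem {X V E : Type*} [TopologicalSpace X]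
    [TopologicalSpace V] [AddCommGroup E] [TopologicalSpace E] [IsTopologicalAddGroup E]
    {D : X → V → E} {x₀ : X} {K : Set V} (hK : IsCompact K)
    (hD : ∀ y ∈ K, ContinuousAt (fun p : X × V => D p.1 p.2) (x₀, y)) {W : Set E}
    (hW : W ∈ 𝓝 0) : ∀ᶠ x in 𝓝 x₀, ∀ y ∈ K, D x y - D x₀ y ∈ W := by
  refine hK.eventually_forall_of_forall_eventually fun y hy => ?_
  have hx₀ : ContinuousAt (fun p : X × V => (x₀, p.2)) (x₀, y) := by fun_prop
  have hD₀ : ContinuousAt (fun p : X × V => D x₀ p.2) (x₀, y) := (hD y hy).comp_of_eq hx₀ rfl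
  have h := ((hD y hy).sub hD₀).tendsto
  simp only [Pi.sub_apply, sub_self] at h
  exact h hW

theorem ContinuousMap.tendsto_nhds_of_forall_isCompact_eventually_sub_mem {ι V E : Type*}
    [TopologicalSpace V] [AddCommGroup E] [TopologicalSpace E] [IsTopologicalAddGroup E]
    {p : Set E → Prop} (hb : (𝓝 (0 : E)).HasBasis p id) {l : Filter ι} {F : ι → C(V, E)}
    {F₀ : C(V, E)} (h : ∀ K, IsCompact K → ∀ W, p W → ∀ᶠ i in l, ∀ y ∈ K, F i y - F₀ y ∈ W) :
    Tendsto F l (𝓝 F₀) := by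
  let : UniformSpace E := IsTopologicalAddGroup.rightUniformSpace E
  have : IsUniformAddGroup E := isUniformAddGroup_of_addCommGroup
  refine ContinuousMap.tendsto_iff_forall_isCompact_tendstoUniformlyOn.mpr fun K hK u hu => ?_
  rw [uniformity_eq_comap_nhds_zero E] at hu
  obtain ⟨W, hW, hWu⟩ := (hb.comap _).mem_iff.mp hu
  exact (h K hK W hW).mono fun i hi y hy => hWu (hi y hy)

theorem eventually_forall_slope_sub_mem {G V E : Type*} [Group G] [TopologicalSpace G]
    [IsTopologicalGroup G] [TopologicalSpace V] [AddCommGroup E] [Module ℝ E] [TopologicalSpace E]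
    [IsTopologicalAddGroup E] [ContinuousSMul ℝ E] [LocallyConvexSpace ℝ E]
    {U : Set G} (hU : IsOpen U) {f : G → V → E} {d10 : G → V → OneParam G → E}
    (hf : ContinuousOn (fun p : G × V => f p.1 p.2) (U ×ˢ (univ : Set V)))
    (hd : ∀ x ∈ U, ∀ (y : V) (γ : OneParam G), HasDirDeriv (fun x' => f x' y) x γ (d10 x y γ))
    (hdc : ContinuousOn (fun p : G × V × OneParam G => d10 p.1 p.2.1 p.2.2)
      (U ×ˢ (univ : Set (V × OneParam G))))
    {x : G} (hx : x ∈ U) (γ : OneParam G) {K : Set V} (hK : IsCompact K) {W : Set E}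
    (hW : W ∈ 𝓝 0) (hWclosed : IsClosed W) (hWconv : Convex ℝ W) :
    ∀ᶠ t in 𝓝[≠] (0 : ℝ), ∀ y ∈ K, t⁻¹ • (f (x * γ.1 t) y - f x y) - d10 x y γ ∈ W := by
  have hdγ : ContinuousOn (fun p : G × V => d10 p.1 p.2 γ) (U ×ˢ univ) :=
    hdc.comp (f := fun p : G × V => (p.1, p.2, γ)) (by fun_prop) fun _ hp => ⟨hp.1, trivial⟩
  have hnear : ∀ᶠ s in 𝓝 (0 : ℝ),
      x * γ.1 s ∈ U ∧ ∀ y ∈ K, d10 (x * γ.1 s) y γ - d10 x y γ ∈ W :=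
    (OneParam.tendsto_mul_nhds_zero x γ).eventually <|
      Filter.Eventually.and (hU.mem_nhds hx : ∀ᶠ x' in 𝓝 x, x' ∈ U) <|
        hK.eventually_forall_sub_mem (D := fun x' y => d10 x' y γ)
          (fun _ _ => hdγ.continuousAt ((hU.prod isOpen_univ).mem_nhds ⟨hx, trivial⟩)) hW
  filter_upwards [nhdsWithin_le_nhds hnear.forall_uIcc, self_mem_nhdsWithin] with t ht ht0 y hy
  -- the curve `s ↦ f(x γ(s), y) - s • d10 x y γ` has derivative `d10 (x γ(s)) y γ - d10 x y γ`
  have hslope := slope_mem_of_forall_deriv_mem (c := fun s => f (x * γ.1 s) y - s • d10 x y γ)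
    (c' := fun s => d10 (x * γ.1 s) y γ - d10 x y γ) hWconv hWclosed (Ne.symm ht0) ?_ ?_
    (fun s hs => (ht s (uIoo_subset_uIcc_self hs)).2 y hy)
  · convert hslope using 1
    simp only [slope_def_module, OneParam.map_zero, mul_one, sub_zero, zero_smul, smul_sub,
      inv_smul_smul₀ ht0]
    abel
  · have hfγ : ContinuousOn (fun s : ℝ => f (x * γ.1 s) y) (uIcc 0 t) :=
      hf.comp (f := fun s : ℝ => (x * γ.1 s, y)) (by fun_prop) fun s hs => ⟨(ht s hs).1, trivial⟩
    exact hfγ.sub (by fun_prop)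
  · intro s hs
    refine ((hd _ (ht s (uIoo_subset_uIcc_self hs)).1 y γ).tendsto_along.sub_const
      (d10 x y γ)).congr' (eventually_nhdsWithin_of_forall fun h (hh : h ≠ 0) => ?_)
    simp only [add_smul, smul_sub, smul_add, inv_smul_smul₀ hh]
    abel

theorem vee_isC1_of_isC10_general
    {G V E : Type*} [Group G] [TopologicalSpace G] [IsTopologicalGroup G]
    [TopologicalSpace V]
    [AddCommGroup E] [Module ℝ E] [TopologicalSpace E] [IsTopologicalAddGroup E]
    [ContinuousSMul ℝ E] [LocallyConvexSpace ℝ E]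
    (U : Set G) (hU : IsOpen U) (f : G → V → E) (d10 : G → V → OneParam G → E)
    (hf : ContinuousOn (fun p : G × V => f p.1 p.2) (U ×ˢ (univ : Set V)))
    (hd : ∀ x ∈ U, ∀ (y : V) (γ : OneParam G),
      HasDirDeriv (fun x' => f x' y) x γ (d10 x y γ))
    (hdc : ContinuousOn (fun p : G × V × OneParam G => d10 p.1 p.2.1 p.2.2)
      (U ×ˢ (univ : Set (V × OneParam G)))) :
    ∀ (Fv : G → C(V, E)) (Dv : G → OneParam G → C(V, E)),
      (∀ x ∈ U, ∀ y : V, Fv x y = f x y) →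
      (∀ x ∈ U, ∀ (γ : OneParam G) (y : V), Dv x γ y = d10 x y γ) →
      ContinuousOn Fv U ∧
      (∀ x ∈ U, ∀ γ : OneParam G, HasDirDeriv Fv x γ (Dv x γ)) ∧
      ContinuousOn (fun p : G × OneParam G => Dv p.1 p.2)
        (U ×ˢ (univ : Set (OneParam G))) := by
  intro Fv Dv hFv hDv
  refine ⟨?_, fun x hx γ => ?_, ?_⟩
  · exact ContinuousMap.continuousOn_of_continuousOn_uncurry Fv
      (hf.congr fun p hp => hFv p.1 hp.1 p.2)
  · refine ContinuousMap.tendsto_nhds_of_forall_isCompact_eventually_sub_mem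
      (nhds_hasBasis_absConvex_closed ℝ E) fun K hK W ⟨hW, hWclosed, hWconv⟩ => ?_
    filter_upwards [eventually_forall_slope_sub_mem hU hf hd hdc hx γ hK hW hWclosed hWconv.2,
      nhdsWithin_le_nhds ((OneParam.tendsto_mul_nhds_zero x γ).eventually (hU.mem_nhds hx))]
      with t ht htU y hy
    simpa [hFv _ htU, hFv _ hx, hDv _ hx] using ht y hy
  · refine ContinuousMap.continuousOn_of_continuousOn_uncurry _ ?_
    exact (hdc.comp (f := fun p : (G × OneParam G) × V => (p.1.1, p.2, p.1.2)) (by fun_prop)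
      fun _ hp => ⟨hp.1.1, trivial⟩).congr fun p hp => hDv _ hp.1.1 _ _

/-- If `f : U × V → E` is `C^{1,0}` (with `V` a Hausdorff topological space
and partial derivative map `d10`), then `f^∨ : U → C(V,E)`, `x ↦ f(x,·)`, is `C¹` into the
space `C(V,E)` with the compact-open topology, with `d(f^∨)(x,γ) = d^{(1,0)}f(x,·,γ)`,
i.e. `D_γ(f^∨)(x)(y) = D_{(γ,0)}f(x,y)` for all `y ∈ V`. -/
theorem vee_isC1_of_isC10
    {G V E : Type*} [Group G] [TopologicalSpace G] [IsTopologicalGroup G]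
    [TopologicalSpace V] [T2Space V]
    [AddCommGroup E] [Module ℝ E] [TopologicalSpace E] [IsTopologicalAddGroup E]
    [ContinuousSMul ℝ E] [LocallyConvexSpace ℝ E] [T2Space E]
    (U : Set G) (hU : IsOpen U) (f : G → V → E) (d10 : G → V → OneParam G → E)
    (hf : ContinuousOn (fun p : G × V => f p.1 p.2) (U ×ˢ (univ : Set V)))
    (hd : ∀ x ∈ U, ∀ (y : V) (γ : OneParam G),
      HasDirDeriv (fun x' => f x' y) x γ (d10 x y γ))
    (hdc : ContinuousOn (fun p : G × V × OneParam G => d10 p.1 p.2.1 p.2.2)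
      (U ×ˢ (univ : Set (V × OneParam G)))) :
    ∀ (Fv : G → C(V, E)) (Dv : G → OneParam G → C(V, E)),
      (∀ x ∈ U, ∀ y : V, Fv x y = f x y) →
      (∀ x ∈ U, ∀ (γ : OneParam G) (y : V), Dv x γ y = d10 x y γ) →
      ContinuousOn Fv U ∧
      (∀ x ∈ U, ∀ γ : OneParam G, HasDirDeriv Fv x γ (Dv x γ)) ∧
      ContinuousOn (fun p : G × OneParam G => Dv p.1 p.2)
        (U ×ˢ (univ : Set (OneParam G))) :=
  vee_isC1_of_isC10_general U hU f d10 hf hd hdc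
end

section
/- Let X be a Hausdorff topological space, H a topological group, V ⊆ H open, and E a locally convex space. If f : X × V → E is a C^{0,1}-map, then for each x ∈ X the map f^∨(x) := f(x,·) : V → E is C¹ with d(f^∨(x))(y,η) = d^{(0,1)}f(x,y,η) for all y ∈ V, η ∈ 𝔏(H); moreover, the maps X → C(V,E), x ↦ f(x,·), and X → C(V × 𝔏(H), E), x ↦ d^{(0,1)}f(x,·,·), are continuous, where the function spaces carry the compact-open topology. -/
open Filter Topology Set

/-! Everything is the exponential law `C(X × W, Z) → C(X, C(W, Z))` for the compact-open
topology, which needs no local compactness in this direction: `x ↦ f(x,·)` is the curry of the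
jointly continuous map `(x, y) ↦ f(x, y)` on `X × V`, and likewise for `d^{(0,1)}f`. -/

theorem ContinuousOn.continuous_curry_of_mapsTo {X Y W Z : Type*} [TopologicalSpace X]
    [TopologicalSpace Y] [TopologicalSpace W] [TopologicalSpace Z]
    {g : X → Y → Z} {s : Set Y} (hg : ContinuousOn (Function.uncurry g) (univ ×ˢ s))
    {e : W → Y} (he : Continuous e) (hes : ∀ w, e w ∈ s)
    {F : X → C(W, Z)} (hF : ∀ x w, F x w = g x (e w)) : Continuous F := by
  let G : C(X × W, Z) :=
    ⟨fun q => g q.1 (e q.2),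
      hg.comp_continuous (continuous_fst.prodMk (he.comp continuous_snd))
        fun q => ⟨mem_univ _, hes q.2⟩⟩
  have hFG : F = G.curry := funext fun x => ContinuousMap.ext (hF x)
  exact hFG ▸ G.curry.continuous

theorem slice_isC1_and_vee_continuous_of_isC01_general
    {X H E : Type*} [TopologicalSpace X]
    [Group H] [TopologicalSpace H]
    [AddCommGroup E] [Module ℝ E] [TopologicalSpace E]
    (V : Set H) (f : X → H → E) (d01 : X → H → OneParam H → E)
    (hf : ContinuousOn (fun p : X × H => f p.1 p.2) ((univ : Set X) ×ˢ V))
    (hd : ∀ (x : X), ∀ y ∈ V, ∀ η : OneParam H, HasDirDeriv (f x) y η (d01 x y η))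
    (hdc : ContinuousOn (fun p : X × H × OneParam H => d01 p.1 p.2.1 p.2.2)
      ((univ : Set X) ×ˢ V ×ˢ (univ : Set (OneParam H)))) :
    (∀ x : X,
      ContinuousOn (f x) V ∧
      (∀ y ∈ V, ∀ η : OneParam H, HasDirDeriv (f x) y η (d01 x y η)) ∧
      ContinuousOn (fun p : H × OneParam H => d01 x p.1 p.2)
        (V ×ˢ (univ : Set (OneParam H)))) ∧
    (∀ Fv : X → C(↥V, E), (∀ (x : X) (y : ↥V), Fv x y = f x y.1) → Continuous Fv) ∧
    (∀ Dv : X → C(↥V × OneParam H, E),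
      (∀ (x : X) (p : ↥V × OneParam H), Dv x p = d01 x p.1.1 p.2) → Continuous Dv) := by
  let d : X → H × OneParam H → E := fun x p => d01 x p.1 p.2
  have hdc' : ContinuousOn (Function.uncurry d) (univ ×ˢ V ×ˢ univ) := hdc
  refine ⟨fun x => ⟨hf.uncurry_left x (mem_univ x), hd x, hdc'.uncurry_left x (mem_univ x)⟩,
    fun Fv hFv => ?_, fun Dv hDv => ?_⟩
  · exact hf.continuous_curry_of_mapsTo continuous_subtype_val Subtype.prop hFv
  · exact hdc'.continuous_curry_of_mapsTo (continuous_subtype_val.prodMap continuous_id)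
      (fun p => ⟨p.1.2, mem_univ _⟩) hDv

/-- If `f : X × V → E` is `C^{0,1}` (with `X` a Hausdorff topological space,
`V ⊆ H` open, and partial derivative map `d01 = d^{(0,1)}f`), then for each `x ∈ X` the map
`f^∨(x) = f(x,·) : V → E` is `C¹` with `d(f^∨(x))(y,η) = d^{(0,1)}f(x,y,η)`; moreover the maps
`X → C(V,E)`, `x ↦ f(x,·)`, and `X → C(V × 𝔏(H), E)`, `x ↦ d^{(0,1)}f(x,·,·)`, are continuous
(the function spaces carrying the compact-open topology). -/
theorem slice_isC1_and_vee_continuous_of_isC01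
    {X H E : Type*} [TopologicalSpace X] [T2Space X]
    [Group H] [TopologicalSpace H] [IsTopologicalGroup H]
    [AddCommGroup E] [Module ℝ E] [TopologicalSpace E] [IsTopologicalAddGroup E]
    [ContinuousSMul ℝ E] [LocallyConvexSpace ℝ E] [T2Space E]
    (V : Set H) (hV : IsOpen V) (f : X → H → E) (d01 : X → H → OneParam H → E)
    (hf : ContinuousOn (fun p : X × H => f p.1 p.2) ((univ : Set X) ×ˢ V))
    (hd : ∀ (x : X), ∀ y ∈ V, ∀ η : OneParam H, HasDirDeriv (f x) y η (d01 x y η))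
    (hdc : ContinuousOn (fun p : X × H × OneParam H => d01 p.1 p.2.1 p.2.2)
      ((univ : Set X) ×ˢ V ×ˢ (univ : Set (OneParam H)))) :
    (∀ x : X,
      ContinuousOn (f x) V ∧
      (∀ y ∈ V, ∀ η : OneParam H, HasDirDeriv (f x) y η (d01 x y η)) ∧
      ContinuousOn (fun p : H × OneParam H => d01 x p.1 p.2)
        (V ×ˢ (univ : Set (OneParam H)))) ∧
    (∀ Fv : X → C(↥V, E), (∀ (x : X) (y : ↥V), Fv x y = f x y.1) → Continuous Fv) ∧
    (∀ Dv : X → C(↥V × OneParam H, E),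
      (∀ (x : X) (p : ↥V × OneParam H), Dv x p = d01 x p.1.1 p.2) → Continuous Dv) :=
  slice_isC1_and_vee_continuous_of_isC01_general V f d01 hf hd hdc
end

section
/- Let G be a topological group, U ⊆ G open, V a locally compact Hausdorff topological space, and E a locally convex space. If g : U → C(V,E) is a C¹-map into the space C(V,E) of continuous maps with the compact-open topology, then the map g^∧ : U × V → E, (x,y) ↦ g(x)(y), is C^{1,0}, with d^{(1,0)}(g^∧)(x,y,γ) = (dg(x,γ))(y) for all x ∈ U, y ∈ V, γ ∈ 𝔏(G). -/
open Filter Topology Set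

theorem HasDirDeriv.continuousLinearMap_comp {G E F : Type*} [TopologicalSpace G] [Group G]
    [AddCommGroup E] [Module ℝ E] [TopologicalSpace E]
    [AddCommGroup F] [Module ℝ F] [TopologicalSpace F]
    {f : G → E} {x : G} {γ : OneParam G} {v : E} (L : E →L[ℝ] F) (h : HasDirDeriv f x γ v) :
    HasDirDeriv (fun x' => L (f x')) x γ (L v) := by
  unfold HasDirDeriv at h ⊢
  simpa only [Function.comp_def, map_smul, map_sub] using (L.continuous.tendsto v).comp h

theorem wedge_isC10_of_isC1_general
    {G V E : Type*} [Group G] [TopologicalSpace G]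
    [TopologicalSpace V] [LocallyCompactSpace V]
    [AddCommGroup E] [Module ℝ E] [TopologicalSpace E] [IsTopologicalAddGroup E]
    [ContinuousSMul ℝ E]
    (U : Set G) (g : G → C(V, E)) (dg : G → OneParam G → C(V, E))
    (hg : ContinuousOn g U)
    (hdg : ∀ x ∈ U, ∀ γ : OneParam G, HasDirDeriv g x γ (dg x γ))
    (hdgc : ContinuousOn (fun p : G × OneParam G => dg p.1 p.2)
      (U ×ˢ (univ : Set (OneParam G)))) :
    ContinuousOn (fun p : G × V => g p.1 p.2) (U ×ˢ (univ : Set V)) ∧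
    (∀ x ∈ U, ∀ (y : V) (γ : OneParam G),
      HasDirDeriv (fun x' => g x' y) x γ (dg x γ y)) ∧
    ContinuousOn (fun p : G × V × OneParam G => dg p.1 p.2.2 p.2.1)
      (U ×ˢ (univ : Set (V × OneParam G))) := by
  refine ⟨?_, fun x hx y γ =>
    (hdg x hx γ).continuousLinearMap_comp (ContinuousMap.evalCLM ℝ y), ?_⟩
  · exact (hg.comp continuousOn_fst fun p hp => hp.1).eval continuousOn_snd
  · have hdg_swap : ContinuousOn (fun p : G × V × OneParam G => dg p.1 p.2.2)
        (U ×ˢ univ) :=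
      hdgc.comp (continuousOn_fst.prodMk continuousOn_snd.snd) fun p hp => ⟨hp.1, trivial⟩
    exact hdg_swap.eval continuousOn_snd.fst

/-- If `V` is a locally compact Hausdorff topological space and
`g : U → C(V,E)` is `C¹` (with derivative map `dg`) into `C(V,E)` with the compact-open
topology, then `g^∧ : U × V → E`, `(x,y) ↦ g(x)(y)`, is `C^{1,0}`, with
`d^{(1,0)}(g^∧)(x,y,γ) = dg(x,γ)(y)`. -/
theorem wedge_isC10_of_isC1
    {G V E : Type*} [Group G] [TopologicalSpace G] [IsTopologicalGroup G]
    [TopologicalSpace V] [T2Space V] [LocallyCompactSpace V]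
    [AddCommGroup E] [Module ℝ E] [TopologicalSpace E] [IsTopologicalAddGroup E]
    [ContinuousSMul ℝ E] [LocallyConvexSpace ℝ E] [T2Space E]
    (U : Set G) (hU : IsOpen U) (g : G → C(V, E)) (dg : G → OneParam G → C(V, E))
    (hg : ContinuousOn g U)
    (hdg : ∀ x ∈ U, ∀ γ : OneParam G, HasDirDeriv g x γ (dg x γ))
    (hdgc : ContinuousOn (fun p : G × OneParam G => dg p.1 p.2)
      (U ×ˢ (univ : Set (OneParam G)))) :
    ContinuousOn (fun p : G × V => g p.1 p.2) (U ×ˢ (univ : Set V)) ∧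
    (∀ x ∈ U, ∀ (y : V) (γ : OneParam G),
      HasDirDeriv (fun x' => g x' y) x γ (dg x γ y)) ∧
    ContinuousOn (fun p : G × V × OneParam G => dg p.1 p.2.2 p.2.1)
      (U ×ˢ (univ : Set (V × OneParam G))) :=
  wedge_isC10_of_isC1_general U g dg hg hdg hdgc
end

section
/- Let G and H be topological groups, U ⊆ G and V ⊆ H open subsets, and E a locally convex space. Assume that U × V and U × V × 𝔏(G) are k_ℝ-spaces. Then the map f ↦ f^∨, where f^∨(x) := f(x,·), is a bijection from the set of C^{1,0}-maps U × V → E onto the set of C¹-maps U → C(V,E) (with C(V,E) carrying the compact-open topology); in particular, for every C¹-map g : U → C(V,E), the map g^∧ : U × V → E, (x,y) ↦ g(x)(y), is C^{1,0}. -/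
open Filter Topology Set

/-- `g` is a `C¹`-map on `U` (into a topological vector space). -/
def IsC1 {G F : Type*} [TopologicalSpace G] [Group G]
    [AddCommGroup F] [Module ℝ F] [TopologicalSpace F]
    (g : G → F) (U : Set G) : Prop :=
  ContinuousOn g U ∧
  ∃ dg : G → OneParam G → F,
    (∀ x ∈ U, ∀ γ : OneParam G, HasDirDeriv g x γ (dg x γ)) ∧
    ContinuousOn (fun p : G × OneParam G => dg p.1 p.2) (U ×ˢ (univ : Set (OneParam G)))

/-- `f` is a `C^{1,0}`-map on `U × V`. -/
def IsC10 {G H E : Type*} [TopologicalSpace G] [Group G] [TopologicalSpace H]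
    [AddCommGroup E] [Module ℝ E] [TopologicalSpace E]
    (f : G → H → E) (U : Set G) (V : Set H) : Prop :=
  ContinuousOn (fun p : G × H => f p.1 p.2) (U ×ˢ V) ∧
  ∃ d10 : G → H → OneParam G → E,
    (∀ x ∈ U, ∀ y ∈ V, ∀ γ : OneParam G,
      HasDirDeriv (fun x' => f x' y) x γ (d10 x y γ)) ∧
    ContinuousOn (fun p : G × H × OneParam G => d10 p.1 p.2.1 p.2.2)
      (U ×ˢ V ×ˢ (univ : Set (OneParam G)))

/-- `X` is a `k_ℝ`-space: every real-valued function which is continuous on all compact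
subsets is continuous. -/
def IsKR (X : Type*) [TopologicalSpace X] : Prop :=
  ∀ h : X → ℝ, (∀ K : Set X, IsCompact K → ContinuousOn h K) → Continuous h

open scoped Classical in
/-- The map `F ↦ F^∨` on functions `U × V → E`, with values in functions `U → C(V,E)`
(defined to be `0` where the slice is not continuous). -/
noncomputable def Phi {G H E : Type*} [TopologicalSpace G] [TopologicalSpace H]
    [AddCommGroup E] [TopologicalSpace E] [IsTopologicalAddGroup E]
    {U : Set G} {V : Set H} (F : ↥U × ↥V → E) : ↥U → C(↥V, E) := fun u =>
  if h : Continuous fun v : ↥V => F (u, v) then ⟨fun v => F (u, v), h⟩ else 0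

/-!
For a `C^{1,0}`-map `f`, the mean value theorem in `E` (reduced to the real one by Hahn–Banach)
puts `t⁻¹ (f (x γ(t), y) - f (x, y)) - d f (x, y, γ)` in the closed convex hull of the values
`d f (x γ(s t), y, γ) - d f (x, y, γ)`, `s ∈ [0, 1]`. By continuity of `d f` these are small
uniformly for `y` in a compact set, which is convergence in the compact-open topology of `C(V, E)`.

Conversely, for a `C¹`-map `g` the maps `(x, y) ↦ g x y` and `(x, y, γ) ↦ d g (x, γ) y` are
continuous on compact sets, and the `k_ℝ` hypotheses make them continuous.
-/

theorem continuousOn_prod_of_continuous {X Y Z : Type*} [TopologicalSpace X] [TopologicalSpace Y]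
    [TopologicalSpace Z] {φ : X × Y → Z} {S : Set X} {V : Set Y}
    (hφ : Continuous fun q : S × V => φ (q.1, q.2)) : ContinuousOn φ (S ×ˢ V) :=
  continuousOn_iff_continuous_domRestrict.2 (hφ.comp (Homeomorph.Set.prod S V).continuous)

section CompactOpen

variable {X Y E : Type*} [TopologicalSpace X] [TopologicalSpace Y]
  [AddCommGroup E] [TopologicalSpace E] [IsTopologicalAddGroup E]

theorem ContinuousMap.tendsto_of_forall_isCompact_eventually_sub_mem {ι : Type*}
    {p : Filter ι} {F : ι → C(Y, E)} {φ : C(Y, E)}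
    (h : ∀ K : Set Y, IsCompact K → ∀ W ∈ 𝓝 (0 : E), ∀ᶠ i in p, ∀ y ∈ K, F i y - φ y ∈ W) :
    Tendsto F p (𝓝 φ) := by
  let _ := IsTopologicalAddGroup.rightUniformSpace E
  refine ContinuousMap.tendsto_iff_forall_isCompact_tendstoUniformlyOn.2 fun K hK u hu => ?_
  obtain ⟨W, hW, hWu⟩ := mem_comap.1 (uniformity_eq_comap_nhds_zero' E ▸ hu)
  filter_upwards [h K hK W hW] with i hi y hy
  exact hWu (by simpa only [mem_preimage, ← sub_eq_add_neg] using hi y hy)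

/- The compact-open topology on `C(Y, E)` is that of uniform convergence on compacta for the
uniformity of the group `E`, so `h x → h x₀` uniformly on the compact set `k '' K`. -/
theorem ContinuousOn.eval_of_isCompact {h : X → C(Y, E)} {k : X → Y} {K : Set X}
    (hK : IsCompact K) (hh : ContinuousOn h K) (hk : ContinuousOn k K) :
    ContinuousOn (fun x => h x (k x)) K := fun x hx => by
  let _ := IsTopologicalAddGroup.rightUniformSpace E
  exact (ContinuousMap.tendsto_iff_forall_isCompact_tendstoUniformlyOn.1 (hh x hx) _
    (hK.image_of_continuousOn hk)).tendsto_comp (h x).continuous.continuousWithinAt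
    ((hk x hx).tendsto_nhdsWithin (mapsTo_image k K))

end CompactOpen

theorem tendsto_slope_comp_mul_const {E : Type*} [AddCommGroup E] [Module ℝ E]
    [TopologicalSpace E] [ContinuousConstSMul ℝ E] {F : ℝ → E} {s t : ℝ} {L : E} (ht : t ≠ 0)
    (hF : Tendsto (fun h : ℝ => h⁻¹ • (F (s * t + h) - F (s * t))) (𝓝[≠] 0) (𝓝 L)) :
    Tendsto (fun h : ℝ => h⁻¹ • (F ((s + h) * t) - F (s * t))) (𝓝[≠] 0) (𝓝 (t • L)) := by
  have hmul : Tendsto (· * t) (𝓝[≠] (0 : ℝ)) (𝓝[≠] 0) := by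
    have := (Homeomorph.mulRight₀ t ht).map_punctured_nhds_eq 0
    simp only [Homeomorph.coe_mulRight₀, zero_mul] at this
    exact this.le
  refine ((hF.comp hmul).const_smul t).congr' ?_
  filter_upwards [self_mem_nhdsWithin] with h (hh : h ≠ 0)
  simp only [Function.comp_apply, smul_smul, add_mul, mul_inv, mul_comm t, mul_assoc,
    inv_mul_cancel₀ ht, mul_one]

section LocallyConvex

variable {E : Type*} [AddCommGroup E] [Module ℝ E] [TopologicalSpace E]
  [IsTopologicalAddGroup E] [ContinuousSMul ℝ E] [LocallyConvexSpace ℝ E]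

/- The gauge of a convex neighbourhood `W` of `0` is continuous, so on a `k_ℝ`-space
`x ↦ gauge W (φ x - φ x₀)` is continuous, and it is `< 1` near `x₀`. -/
theorem IsKR.continuous_of_forall_isCompact {X : Type*} [TopologicalSpace X] (hX : IsKR X)
    {φ : X → E} (h : ∀ K : Set X, IsCompact K → ContinuousOn φ K) : Continuous φ := by
  refine continuous_iff_continuousAt.2 fun x₀ => ?_
  rw [ContinuousAt, ← tendsto_sub_nhds_zero_iff]
  refine (LocallyConvexSpace.convex_basis_zero ℝ E).tendsto_right_iff.2 ?_
  rintro W ⟨hW, hWc⟩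
  have hgauge : Continuous fun x => gauge W (φ x - φ x₀) :=
    hX _ fun K hK => (continuous_gauge hWc hW).comp_continuousOn ((h K hK).sub continuousOn_const)
  filter_upwards [(isOpen_lt hgauge continuous_const).mem_nhds
    (show gauge W (φ x₀ - φ x₀) < 1 by simp)] with x hx
  exact setOfPred_gauge_lt_one_subset_self hWc (mem_of_mem_nhds hW) (absorbent_nhds_zero hW) hx

theorem IsKR.continuous_eval {X Y : Type*} [TopologicalSpace X] [TopologicalSpace Y] (hX : IsKR X)
    {h : X → C(Y, E)} (hh : Continuous h) {k : X → Y} (hk : Continuous k) :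
    Continuous fun x => h x (k x) :=
  hX.continuous_of_forall_isCompact fun _ hK => hh.continuousOn.eval_of_isCompact hK hk.continuousOn

theorem sub_mem_of_tendsto_slope {c d : ℝ → E} {C : Set E} (hC : Convex ℝ C) (hCc : IsClosed C)
    (hc : ∀ s ∈ Icc (0 : ℝ) 1,
      Tendsto (fun h : ℝ => h⁻¹ • (c (s + h) - c s)) (𝓝[≠] 0) (𝓝 (d s)))
    (hdC : ∀ s ∈ Icc (0 : ℝ) 1, d s ∈ C) : c 1 - c 0 ∈ C := by
  by_contra hmem
  obtain ⟨φ, u, hu, hφC⟩ := geometric_hahn_banach_point_closed hC hCc hmem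
  have hderiv : ∀ s ∈ Icc (0 : ℝ) 1, HasDerivAt (fun t => φ (c t)) (φ (d s)) s := fun s hs => by
    rw [hasDerivAt_iff_tendsto_slope_zero]
    refine ((φ.continuous.tendsto (d s)).comp (hc s hs)).congr fun h => ?_
    simp [map_sub, map_smul]
  obtain ⟨ξ, hξ, hslope⟩ := exists_hasDerivAt_eq_slope (fun t => φ (c t)) (fun s => φ (d s))
    one_pos (fun s hs => (hderiv s hs).continuousAt.continuousWithinAt)
    fun s hs => hderiv s (Ioo_subset_Icc_self hs)
  have := hφC _ (hdC ξ (Ioo_subset_Icc_self hξ))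
  rw [map_sub] at hu
  simp only [hslope, sub_zero, div_one] at this
  linarith

/- Mean value theorem for `σ ↦ t⁻¹ • F (σ * t) - σ • L` on `[0, 1]`. -/
theorem slope_sub_mem_of_forall_deriv_sub_mem {F D : ℝ → E} {C : Set E} (hC : Convex ℝ C)
    (hCc : IsClosed C) {t : ℝ} (ht : t ≠ 0) {L : E}
    (hF : ∀ σ ∈ Icc (0 : ℝ) 1,
      Tendsto (fun h : ℝ => h⁻¹ • (F (σ * t + h) - F (σ * t))) (𝓝[≠] 0) (𝓝 (D (σ * t))))
    (hD : ∀ σ ∈ Icc (0 : ℝ) 1, D (σ * t) - L ∈ C) :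
    t⁻¹ • (F t - F 0) - L ∈ C := by
  have hslope : ∀ σ ∈ Icc (0 : ℝ) 1, Tendsto (fun h : ℝ => h⁻¹ •
      ((t⁻¹ • F ((σ + h) * t) - (σ + h) • L) - (t⁻¹ • F (σ * t) - σ • L)))
      (𝓝[≠] 0) (𝓝 (D (σ * t) - L)) := fun σ hσ => by
    have hscaled := (tendsto_slope_comp_mul_const ht (hF σ hσ)).const_smul t⁻¹
    rw [smul_smul, inv_mul_cancel₀ ht, one_smul] at hscaled
    refine (hscaled.sub tendsto_const_nhds).congr' ?_
    filter_upwards [self_mem_nhdsWithin] with h (hh : h ≠ 0)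
    simp only [smul_sub, smul_add, add_smul, smul_smul, inv_mul_cancel₀ hh, one_smul,
      mul_comm t⁻¹ h⁻¹]
    abel
  convert sub_mem_of_tendsto_slope (c := fun σ => t⁻¹ • F (σ * t) - σ • L) hC hCc hslope hD
    using 1
  simp only [one_mul, zero_mul, one_smul, zero_smul, sub_zero, smul_sub]
  abel

/- On the compact set `K` the derivative `D s` is uniformly close to `D 0` for small `s`, and
the closed convex neighbourhoods of `0` form a basis. -/
theorem eventually_forall_slope_sub_mem_s10 {X : Type*} [TopologicalSpace X] {F D : ℝ → X → E}
    {K : Set X} (hK : IsCompact K)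
    (hF : ∀ᶠ s in 𝓝 0, ∀ v ∈ K,
      Tendsto (fun h : ℝ => h⁻¹ • (F (s + h) v - F s v)) (𝓝[≠] 0) (𝓝 (D s v)))
    (hD : ∀ v ∈ K, ContinuousAt (fun p : ℝ × X => D p.1 p.2) (0, v))
    {W : Set E} (hW : W ∈ 𝓝 0) :
    ∀ᶠ t in 𝓝[≠] 0, ∀ v ∈ K, t⁻¹ • (F t v - F 0 v) - D 0 v ∈ W := by
  obtain ⟨C, ⟨hC, hCc, hCconv⟩, hCW⟩ := (nhds_hasBasis_absConvex_closed ℝ E).mem_iff.1 hW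
  have hDC : ∀ᶠ s in 𝓝 0, ∀ v ∈ K, D s v - D 0 v ∈ C := by
    refine hK.eventually_forall_of_forall_eventually fun v hv => ?_
    have hD0 : ContinuousAt (fun p : ℝ × X => D 0 p.2) (0, v) :=
      (hD v hv).comp_of_eq (continuous_const.prodMk continuous_snd).continuousAt rfl
    have hlim := (hD v hv).tendsto.sub hD0.tendsto
    rw [sub_self] at hlim
    exact hlim.eventually_mem hC
  have hsegment : ∀ᶠ t in 𝓝 (0 : ℝ), ∀ σ ∈ Icc (0 : ℝ) 1, (∀ v ∈ K,
      Tendsto (fun h : ℝ => h⁻¹ • (F (σ * t + h) v - F (σ * t) v)) (𝓝[≠] 0)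
        (𝓝 (D (σ * t) v))) ∧ ∀ v ∈ K, D (σ * t) v - D 0 v ∈ C := by
    refine isCompact_Icc.eventually_forall_of_forall_eventually fun σ _ => ?_
    have hmul : Tendsto (fun z : ℝ × ℝ => z.2 * z.1) (𝓝 (0, σ)) (𝓝 0) :=
      (continuous_snd.mul continuous_fst).tendsto' _ _ (mul_zero σ)
    exact hmul.eventually (hF.and hDC)
  filter_upwards [nhdsWithin_le_nhds hsegment, self_mem_nhdsWithin] with t ht (ht0 : t ≠ 0) v hv
  exact hCW (slope_sub_mem_of_forall_deriv_sub_mem (F := (F · v)) (D := (D · v)) hCconv.2 hCc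
    ht0 (fun σ hσ => (ht σ hσ).1 v hv) fun σ hσ => (ht σ hσ).2 v hv)

end LocallyConvex

section Slices

variable {X Y E : Type*} [TopologicalSpace Y] [TopologicalSpace E] [Zero E]

open scoped Classical in
/-- `φ^∨ x = φ x` restricted to `V`, made `0` where this restriction is not continuous. -/
noncomputable def sliceMap (φ : X → Y → E) (V : Set Y) : X → C(V, E) := fun x =>
  if h : Continuous fun v : V => φ x v then ⟨fun v => φ x v, h⟩ else 0

/-- `g^∧`, extended by `0` outside `V`. -/
noncomputable def uncurryOn (V : Set Y) (g : X → C(V, E)) : X → Y → E := fun x y =>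
  open scoped Classical in if h : y ∈ V then g x ⟨y, h⟩ else 0

theorem sliceMap_apply [TopologicalSpace X] {φ : X → Y → E} {S : Set X} {V : Set Y}
    (hφ : ContinuousOn (fun p : X × Y => φ p.1 p.2) (S ×ˢ V)) {x : X} (hx : x ∈ S) (v : V) :
    sliceMap φ V x v = φ x v := by
  have hslice : Continuous fun v : V => φ x v :=
    hφ.comp_continuous (continuous_const.prodMk continuous_subtype_val) fun v => ⟨hx, v.2⟩
  rw [sliceMap, dif_pos hslice, ContinuousMap.coe_mk]

theorem uncurryOn_apply (V : Set Y) (g : X → C(V, E)) (x : X) (v : V) :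
    uncurryOn V g x v = g x v :=
  dif_pos v.2

theorem sliceMap_uncurryOn (V : Set Y) (g : X → C(V, E)) (x : X) :
    sliceMap (uncurryOn V g) V x = g x := by
  have hslice : (fun v : V => uncurryOn V g x v) = g x := funext (uncurryOn_apply V g x)
  ext v
  rw [sliceMap, dif_pos (hslice ▸ (g x).continuous), ContinuousMap.coe_mk, uncurryOn_apply]

theorem ContinuousOn.sliceMap [TopologicalSpace X] {φ : X → Y → E} {S : Set X} {V : Set Y}
    (hφ : ContinuousOn (fun p : X × Y => φ p.1 p.2) (S ×ˢ V)) : ContinuousOn (sliceMap φ V) S := by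
  rw [continuousOn_iff_continuous_domRestrict]
  have hφ' : Continuous fun q : S × V => φ q.1 q.2 :=
    hφ.comp_continuous (continuous_subtype_val.prodMap continuous_subtype_val)
      fun q => ⟨q.1.2, q.2.2⟩
  refine (ContinuousMap.curry ⟨_, hφ'⟩).continuous.congr fun x => ?_
  ext v
  exact (sliceMap_apply hφ x.2 v).symm

end Slices

theorem OneParam.map_zero_s10 {G : Type*} [TopologicalSpace G] [Group G] (γ : OneParam G) :
    γ.1 0 = 1 := by
  simpa using γ.2 0 0

theorem HasDirDeriv.tendsto_slope_mul_oneParam {G E : Type*} [TopologicalSpace G] [Group G]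
    [AddCommGroup E] [Module ℝ E] [TopologicalSpace E] {f : G → E} {x : G} {γ : OneParam G}
    {s : ℝ} {L : E} (hf : HasDirDeriv f (x * γ.1 s) γ L) :
    Tendsto (fun h : ℝ => h⁻¹ • (f (x * γ.1 (s + h)) - f (x * γ.1 s))) (𝓝[≠] 0) (𝓝 L) := by
  simpa only [HasDirDeriv, γ.2, ← mul_assoc] using hf

section ExponentialLaw

variable {G H E : Type*} [Group G] [TopologicalSpace G] [TopologicalSpace H]
  [AddCommGroup E] [Module ℝ E] [TopologicalSpace E] [IsTopologicalAddGroup E]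
  [ContinuousSMul ℝ E] [LocallyConvexSpace ℝ E] {U : Set G} {V : Set H}

theorem hasDirDeriv_sliceMap [IsTopologicalGroup G] {f : G → H → E}
    {d10 : G → H → OneParam G → E} (hU : IsOpen U)
    (hf : ContinuousOn (fun p : G × H => f p.1 p.2) (U ×ˢ V))
    (hd10 : ∀ x ∈ U, ∀ y ∈ V, ∀ γ : OneParam G, HasDirDeriv (fun x' => f x' y) x γ (d10 x y γ))
    (hd10c : ContinuousOn (fun p : G × H × OneParam G => d10 p.1 p.2.1 p.2.2)
      (U ×ˢ V ×ˢ (univ : Set (OneParam G))))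
    {x : G} (hx : x ∈ U) (γ : OneParam G) :
    HasDirDeriv (sliceMap f V) x γ (sliceMap (fun x' y => d10 x' y γ) V x) := by
  have hpath : Tendsto (fun s : ℝ => x * γ.1 s) (𝓝 0) (𝓝 x) := by
    have : Continuous fun s : ℝ => x * γ.1 s := by fun_prop
    exact this.tendsto' 0 x (by simp [γ.map_zero_s10])
  have hpathU : ∀ᶠ s in 𝓝 (0 : ℝ), x * γ.1 s ∈ U := hpath.eventually_mem (hU.mem_nhds hx)
  have hD : ∀ v : V, ContinuousAt (fun p : ℝ × V => d10 (x * γ.1 p.1) p.2 γ) (0, v) := fun v => by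
    have hψ : Tendsto (fun p : ℝ × V => (x * γ.1 p.1, (p.2 : H), γ)) (𝓝 (0, v)) (𝓝 (x, v, γ)) := by
      have : Continuous fun p : ℝ × V => (x * γ.1 p.1, (p.2 : H), γ) := by fun_prop
      exact this.tendsto' _ _ (by simp [γ.map_zero_s10])
    have hψS : ∀ᶠ p : ℝ × V in 𝓝 (0, v), (x * γ.1 p.1, (p.2 : H), γ) ∈ U ×ˢ V ×ˢ univ :=
      (hpathU.prod_inl_nhds v).mono fun p hp => ⟨hp, p.2.2, mem_univ γ⟩
    show Tendsto _ _ (𝓝 (d10 (x * γ.1 0) v γ))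
    rw [γ.map_zero_s10, mul_one]
    exact (hd10c _ ⟨hx, v.2, mem_univ γ⟩).tendsto.comp (tendsto_nhdsWithin_iff.2 ⟨hψ, hψS⟩)
  have hdx : ∀ v : V, sliceMap (fun x' y => d10 x' y γ) V x v = d10 x v γ :=
    sliceMap_apply (hd10c.comp (f := fun p : G × H => (p.1, p.2, γ)) (by fun_prop)
      fun p hp => ⟨hp.1, hp.2, mem_univ γ⟩) hx
  refine ContinuousMap.tendsto_of_forall_isCompact_eventually_sub_mem fun K hK W hW => ?_
  have hslope := eventually_forall_slope_sub_mem_s10 (F := fun s (v : V) => f (x * γ.1 s) v)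
    (D := fun s (v : V) => d10 (x * γ.1 s) v γ) hK
    (hpathU.mono fun s hs v _ => (hd10 _ hs v v.2 γ).tendsto_slope_mul_oneParam)
    (fun v _ => hD v) hW
  filter_upwards [hslope, nhdsWithin_le_nhds hpathU] with t ht htU v hv
  simpa [sliceMap_apply hf htU, sliceMap_apply hf hx, hdx, γ.map_zero_s10] using ht v hv

theorem IsC10.isC1_sliceMap [IsTopologicalGroup G] {f : G → H → E} (hU : IsOpen U)
    (hf : IsC10 f U V) : IsC1 (sliceMap f V) U := by
  obtain ⟨hfc, d10, hd10, hd10c⟩ := hf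
  have hdc : ContinuousOn (sliceMap (fun p y => d10 p.1 y p.2) V) (U ×ˢ univ) :=
    ContinuousOn.sliceMap (φ := fun (p : G × OneParam G) y => d10 p.1 y p.2)
      (hd10c.comp (f := fun q : (G × OneParam G) × H => (q.1.1, q.2, q.1.2)) (by fun_prop)
        fun q hq => ⟨hq.1.1, hq.2, mem_univ _⟩)
  exact ⟨hfc.sliceMap, fun x γ => sliceMap (fun x' y => d10 x' y γ) V x,
    fun x hx γ => hasDirDeriv_sliceMap hU hfc hd10 hd10c hx γ, hdc⟩

theorem IsC1.isC10_uncurryOn (hkr1 : IsKR (U × V)) (hkr2 : IsKR (U × V × OneParam G))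
    {g : G → C(V, E)} (hg : IsC1 g U) : IsC10 (uncurryOn V g) U V := by
  obtain ⟨hgc, dg, hdg, hdgc⟩ := hg
  have hgU : Continuous fun u : U => g u :=
    hgc.comp_continuous continuous_subtype_val Subtype.prop
  have hdgU : Continuous fun q : U × OneParam G => dg q.1 q.2 :=
    hdgc.comp_continuous (continuous_subtype_val.prodMap continuous_id) fun q => ⟨q.1.2, trivial⟩
  refine ⟨continuousOn_prod_of_continuous ?_, fun x y γ => uncurryOn V (dg · γ) x y,
    fun x hx y hy γ => ?_, continuousOn_prod_of_continuous ?_⟩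
  · simpa only [uncurryOn_apply, Function.comp_apply] using
      hkr1.continuous_eval (hgU.comp continuous_fst) continuous_snd
  · simpa only [HasDirDeriv, uncurryOn_apply V _ _ ⟨y, hy⟩, Function.comp_def,
      ContinuousMap.smul_apply, ContinuousMap.sub_apply] using
      ((continuous_eval_const (⟨y, hy⟩ : V)).tendsto _).comp (hdg x hx γ)
  · have := hkr2.continuous_eval (hdgU.comp (continuous_fst.prodMk continuous_snd.snd))
      continuous_snd.fst
    have hr : Continuous fun q : U × ↥(V ×ˢ (univ : Set (OneParam G))) =>
        (q.1, (⟨q.2.1.1, q.2.2.1⟩ : V), q.2.1.2) := by fun_prop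
    exact (this.comp hr).congr fun q => (uncurryOn_apply V _ _ ⟨_, q.2.2.1⟩).symm

end ExponentialLaw

theorem exp_law_C10_of_kR_general
    {G H E : Type*} [Group G] [TopologicalSpace G] [IsTopologicalGroup G]
    [TopologicalSpace H]
    [AddCommGroup E] [Module ℝ E] [TopologicalSpace E] [IsTopologicalAddGroup E]
    [ContinuousSMul ℝ E] [LocallyConvexSpace ℝ E]
    (U : Set G) (V : Set H) (hU : IsOpen U)
    (hkr1 : IsKR (↥U × ↥V)) (hkr2 : IsKR (↥U × ↥V × OneParam G)) :
    Set.BijOn (Phi (E := E) (U := U) (V := V))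
      {F : ↥U × ↥V → E | ∃ f : G → H → E,
        IsC10 f U V ∧ ∀ p : ↥U × ↥V, F p = f p.1.1 p.2.1}
      {Γ : ↥U → C(↥V, E) | ∃ g : G → C(↥V, E),
        IsC1 g U ∧ ∀ u : ↥U, Γ u = g u.1} ∧
    (∀ g : G → C(↥V, E), IsC1 g U →
      ∃ f : G → H → E, IsC10 f U V ∧ ∀ x ∈ U, ∀ v : ↥V, f x v.1 = g x v) := by
  have hPhi : ∀ f : G → H → E, Phi (fun p : U × V => f p.1 p.2) = fun u : U => sliceMap f V u :=
    fun _ => rfl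
  refine ⟨⟨?_, ?_, ?_⟩, fun g hg => ⟨uncurryOn V g, hg.isC10_uncurryOn hkr1 hkr2,
    fun x _ v => uncurryOn_apply V g x v⟩⟩
  · rintro F ⟨f, hf, hF⟩
    obtain rfl : F = fun p => f p.1 p.2 := funext hF
    exact ⟨sliceMap f V, hf.isC1_sliceMap hU, fun u => by rw [hPhi]⟩
  · rintro F₁ ⟨f₁, hf₁, hF₁⟩ F₂ ⟨f₂, hf₂, hF₂⟩ heq
    obtain rfl : F₁ = fun p => f₁ p.1 p.2 := funext hF₁
    obtain rfl : F₂ = fun p => f₂ p.1 p.2 := funext hF₂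
    funext ⟨u, v⟩
    have := congrArg (fun Γ : U → C(V, E) => Γ u v) heq
    simpa only [hPhi, sliceMap_apply hf₁.1 u.2, sliceMap_apply hf₂.1 u.2] using this
  · rintro Γ ⟨g, hg, hΓ⟩
    refine ⟨fun p => uncurryOn V g p.1 p.2, ⟨_, hg.isC10_uncurryOn hkr1 hkr2, fun _ => rfl⟩, ?_⟩
    rw [hPhi]
    funext u
    rw [sliceMap_uncurryOn, hΓ]

/-- If `U × V` and `U × V × 𝔏(G)` are `k_ℝ`-spaces, then `f ↦ f^∨` is a
bijection from the set of `C^{1,0}`-maps `U × V → E` onto the set of `C¹`-maps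
`U → C(V,E)`; in particular, for every `C¹`-map `g : U → C(V,E)` the map
`g^∧ : U × V → E`, `(x,y) ↦ g(x)(y)`, is `C^{1,0}`. -/
theorem exp_law_C10_of_kR
    {G H E : Type*} [Group G] [TopologicalSpace G] [IsTopologicalGroup G]
    [Group H] [TopologicalSpace H] [IsTopologicalGroup H]
    [AddCommGroup E] [Module ℝ E] [TopologicalSpace E] [IsTopologicalAddGroup E]
    [ContinuousSMul ℝ E] [LocallyConvexSpace ℝ E] [T2Space E]
    (U : Set G) (V : Set H) (hU : IsOpen U) (hV : IsOpen V)
    (hkr1 : IsKR (↥U × ↥V)) (hkr2 : IsKR (↥U × ↥V × OneParam G)) :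
    Set.BijOn (Phi (E := E) (U := U) (V := V))
      {F : ↥U × ↥V → E | ∃ f : G → H → E,
        IsC10 f U V ∧ ∀ p : ↥U × ↥V, F p = f p.1.1 p.2.1}
      {Γ : ↥U → C(↥V, E) | ∃ g : G → C(↥V, E),
        IsC1 g U ∧ ∀ u : ↥U, Γ u = g u.1} ∧
    (∀ g : G → C(↥V, E), IsC1 g U →
      ∃ f : G → H → E, IsC10 f U V ∧ ∀ x ∈ U, ∀ v : ↥V, f x v.1 = g x v) :=
  exp_law_C10_of_kR_general U V hU hkr1 hkr2
end
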